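/- arXiv:2308.08690 — 2 statements merged into one kernel-verified Lean document; each statement's English description precedes it below -/
import Mathlib

section
/- Let K be a finite set of hyper-links and C a ring-cut. Then some hyper-link of K covers C if and only if there is a path in the hyper-link intersection graph Γ(K) from a hyper-link containing some vertex v ∈ C to a hyper-link containing some vertex w ∈ V(H) ∖ C. -/
/-- A ring-cut is an interval `{a, …, b}` with `1 ≤ a ≤ b ≤ n-1`. -/
def IsRingCut (n : ℕ) (C : Set ℕ) : Prop :=
  ∃ a b : ℕ, 1 ≤ a ∧ a ≤ b ∧ b ≤ n - 1 ∧ C = Set.Icc a b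

/-- A hyper-link `ℓ` covers a ring-cut `C` if `ℓ ∩ C ≠ ∅` and `ℓ ∖ C ≠ ∅`. -/
def Covers (ℓ : Finset ℕ) (C : Set ℕ) : Prop :=
  (∃ x ∈ ℓ, x ∈ C) ∧ (∃ x ∈ ℓ, x ∉ C)

/-- Two hyper-links are intersecting if they share a vertex, or each has a vertex strictly
between two vertices of the other. -/
def Intersecting (ℓ ℓ' : Finset ℕ) : Prop :=
  (ℓ ∩ ℓ').Nonempty ∨
    ((∃ x ∈ ℓ, ∃ y₁ ∈ ℓ', ∃ y₂ ∈ ℓ', y₁ < x ∧ x < y₂) ∧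
      (∃ y ∈ ℓ', ∃ x₁ ∈ ℓ, ∃ x₂ ∈ ℓ, x₁ < y ∧ y < x₂))

/-- There is a path from `u` to `v` in the hyper-link intersection graph `Γ(K)`. -/
def GammaPath (K : Finset (Finset ℕ)) (u v : ℕ) : Prop :=
  ∃ ℓ₁ ∈ K, ∃ ℓ₂ ∈ K, u ∈ ℓ₁ ∧ v ∈ ℓ₂ ∧
    Relation.ReflTransGen (fun a b => a ∈ K ∧ b ∈ K ∧ Intersecting a b) ℓ₁ ℓ₂

/-
A hyper-link that meets an interval `C` without covering it lies inside `C`, and any hyper-link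
intersecting one inside `C` meets `C` again: a shared vertex is in `C`, and a vertex strictly
between two vertices of `C` is in `C` since `C` is an interval. Hence if no link of `K` covers
`C`, every link reachable in `Γ(K)` from a link meeting `C` lies inside `C`, so no path leaves
`C`. Conversely a covering link is itself a path of length zero.
-/

lemma forall_mem_of_not_covers {ℓ : Finset ℕ} {C : Set ℕ} (hℓ : ¬ Covers ℓ C)
    (hmeet : ∃ x ∈ ℓ, x ∈ C) : ∀ x ∈ ℓ, x ∈ C := by
  by_contra! hout
  exact hℓ ⟨hmeet, hout⟩

lemma Intersecting.exists_mem_of_forall_mem {ℓ ℓ' : Finset ℕ} {C : Set ℕ} (hC : C.OrdConnected)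
    (h : Intersecting ℓ ℓ') (hℓ : ∀ x ∈ ℓ, x ∈ C) : ∃ y ∈ ℓ', y ∈ C := by
  rcases h with ⟨z, hz⟩ | ⟨-, y, hy, x₁, hx₁, x₂, hx₂, hx₁y, hyx₂⟩
  · rw [Finset.mem_inter] at hz
    exact ⟨z, hz.2, hℓ z hz.1⟩
  · exact ⟨y, hy, hC.out (hℓ x₁ hx₁) (hℓ x₂ hx₂) ⟨hx₁y.le, hyx₂.le⟩⟩

lemma forall_mem_of_reflTransGen {K : Finset (Finset ℕ)} {C : Set ℕ} (hC : C.OrdConnected)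
    (hK : ∀ ℓ ∈ K, ¬ Covers ℓ C) {ℓ₁ ℓ₂ : Finset ℕ} (h₁ : ℓ₁ ∈ K) (hmeet : ∃ x ∈ ℓ₁, x ∈ C)
    (hpath : Relation.ReflTransGen (fun a b => a ∈ K ∧ b ∈ K ∧ Intersecting a b) ℓ₁ ℓ₂) :
    ∀ x ∈ ℓ₂, x ∈ C := by
  induction hpath with
  | refl => exact forall_mem_of_not_covers (hK ℓ₁ h₁) hmeet
  | tail _ hstep ih =>
    obtain ⟨-, hqK, hint⟩ := hstep
    exact forall_mem_of_not_covers (hK _ hqK) (hint.exists_mem_of_forall_mem hC ih)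

lemma GammaPath.mem_of_forall_not_covers {K : Finset (Finset ℕ)} {C : Set ℕ}
    (hC : C.OrdConnected) (hK : ∀ ℓ ∈ K, ¬ Covers ℓ C) {v w : ℕ} (hv : v ∈ C)
    (hvw : GammaPath K v w) : w ∈ C := by
  obtain ⟨ℓ₁, h₁, ℓ₂, -, hv₁, hw₂, hpath⟩ := hvw
  exact forall_mem_of_reflTransGen hC hK h₁ ⟨v, hv₁, hv⟩ hpath w hw₂

lemma IsRingCut.ordConnected {n : ℕ} {C : Set ℕ} (hC : IsRingCut n C) : C.OrdConnected := by
  obtain ⟨a, b, -, -, -, rfl⟩ := hC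
  exact Set.ordConnected_Icc

theorem stmt2_general (n : ℕ) (K : Finset (Finset ℕ))
    (hK : ∀ ℓ ∈ K, ℓ ⊆ Finset.range n ∧ 2 ≤ ℓ.card)
    (C : Set ℕ) (hC : IsRingCut n C) :
    (∃ ℓ ∈ K, Covers ℓ C) ↔ ∃ v ∈ C, ∃ w : ℕ, w < n ∧ w ∉ C ∧ GammaPath K v w := by
  constructor
  · rintro ⟨ℓ, hℓ, ⟨v, hvℓ, hvC⟩, w, hwℓ, hwC⟩
    exact ⟨v, hvC, w, Finset.mem_range.mp ((hK ℓ hℓ).1 hwℓ), hwC,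
      ℓ, hℓ, ℓ, hℓ, hvℓ, hwℓ, .refl⟩
  · rintro ⟨v, hvC, w, -, hwC, hvw⟩
    by_contra! hno
    exact hwC (hvw.mem_of_forall_not_covers hC.ordConnected hno hvC)

/-- Some hyper-link of `K` covers the ring-cut `C` iff there is a path in `Γ(K)` from a
hyper-link containing some `v ∈ C` to a hyper-link containing some `w ∈ V(H) ∖ C`. -/
theorem stmt2 (n : ℕ) (hn : 3 ≤ n) (K : Finset (Finset ℕ))
    (hK : ∀ ℓ ∈ K, ℓ ⊆ Finset.range n ∧ 2 ≤ ℓ.card)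
    (C : Set ℕ) (hC : IsRingCut n C) :
    (∃ ℓ ∈ K, Covers ℓ C) ↔ ∃ v ∈ C, ∃ w : ℕ, w < n ∧ w ∉ C ∧ GammaPath K v w :=
  stmt2_general n K hK C hC
end

section
/- Let F be a feasible R-special directed solution and K a finite set of hyper-links. A directed link (u,v) ∈ F belongs to drop_F(K) if and only if the hyper-link intersection graph Γ(K) contains a path from a hyper-link containing v to a hyper-link containing some v-good vertex w. -/
/-- `Reach F u v`: there is a directed path of links of `F` from `u` to `v`. -/
def Reach (F : Finset (ℕ × ℕ)) (u v : ℕ) : Prop :=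
  Relation.ReflTransGen (fun a b => (a, b) ∈ F) u v

/-- A directed link `(u,v)` enters a cut `C` if `v ∈ C` and `u ∉ C`. -/
def Enters (f : ℕ × ℕ) (C : Set ℕ) : Prop := f.2 ∈ C ∧ f.1 ∉ C

/-- Two directed links cross if their intervals `[a,b]`, `[c,d]` satisfy
`a < c < b < d` or `c < a < d < b`. -/
def Crosses (f g : ℕ × ℕ) : Prop :=
  (min f.1 f.2 < min g.1 g.2 ∧ min g.1 g.2 < max f.1 f.2 ∧ max f.1 f.2 < max g.1 g.2) ∨
    (min g.1 g.2 < min f.1 f.2 ∧ min f.1 f.2 < max g.1 g.2 ∧ max g.1 g.2 < max f.1 f.2)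

/-- `F` is an `R`-special directed solution (with root `r = 0`):
(1) the endpoints of every link are distinct and lie in `R`;
(2) `(R, F)` is an `r`-out arborescence;
(3) no two links of `F` cross;
(4) no two links of `F` leaving the same vertex go in the same direction. -/
def RSpecial (R : Finset ℕ) (F : Finset (ℕ × ℕ)) : Prop :=
  (∀ f ∈ F, f.1 ≠ f.2 ∧ f.1 ∈ R ∧ f.2 ∈ R) ∧
    (∀ f ∈ F, f.2 ≠ 0) ∧
    (∀ v ∈ R, v ≠ 0 → ∃! f : ℕ × ℕ, f ∈ F ∧ f.2 = v) ∧
    (∀ v ∈ R, Reach F 0 v) ∧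
    (∀ f ∈ F, ∀ g ∈ F, f ≠ g → ¬Crosses f g) ∧
    (∀ f ∈ F, ∀ g ∈ F, f ≠ g → f.1 = g.1 →
      ¬((f.1 < f.2 ∧ g.1 < g.2) ∨ (f.2 < f.1 ∧ g.2 < g.1)))

/-- `F` is feasible: every dangerous ring-cut is entered by some link of `F`. -/
def FeasibleDir (n : ℕ) (R : Finset ℕ) (F : Finset (ℕ × ℕ)) : Prop :=
  ∀ C : Set ℕ, IsRingCut n C → (C ∩ ↑R).Nonempty → ∃ f ∈ F, Enters f C

/-- A link `f = (u,v) ∈ F` is responsible for a cut `C` if it enters `C` and no link on the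
unique directed path in `(R,F)` from the root to `u` (i.e. no link of `F` whose head is an
ancestor of `u`) enters `C`. -/
def Responsible (F : Finset (ℕ × ℕ)) (f : ℕ × ℕ) (C : Set ℕ) : Prop :=
  f ∈ F ∧ Enters f C ∧ ∀ g ∈ F, Reach F g.2 f.1 → ¬Enters g C

/-- `[a, b]` is the `v`-bad interval `I_v`: the maximal interval of `V(H)` containing `v`
that contains no terminal which is not a descendant of `v`. -/
def IsBadInterval (n : ℕ) (R : Finset ℕ) (F : Finset (ℕ × ℕ)) (v a b : ℕ) : Prop :=
  a ≤ v ∧ v ≤ b ∧ b ≤ n - 1 ∧ (∀ w ∈ R, a ≤ w → w ≤ b → Reach F v w) ∧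
    ∀ a' b' : ℕ, a' ≤ a → b ≤ b' → b' ≤ n - 1 →
      (∀ w ∈ R, a' ≤ w → w ≤ b' → Reach F v w) → a' = a ∧ b' = b

/-- `f ∈ drop_F(K)`: every dangerous ring-cut that `f` is responsible for is covered by
some hyper-link of `K`. -/
def InDrop (n : ℕ) (R : Finset ℕ) (F : Finset (ℕ × ℕ)) (K : Finset (Finset ℕ))
    (f : ℕ × ℕ) : Prop :=
  f ∈ F ∧ ∀ C : Set ℕ, IsRingCut n C → (C ∩ ↑R).Nonempty → Responsible F f C →
    ∃ ℓ ∈ K, Covers ℓ C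

/-!
A link `(u,v)` of `F` is responsible for a ring-cut `C` exactly when `v ∈ C` and every
terminal of `C` descends from `v`. The non-crossing and direction conditions force every
terminal strictly under a link to descend from its head; so if two links enter `C` from
ancestries avoiding `C`, either one lies under the other, or both lie under a link jumping
over `C`, and descending along such jumps ends at `v`. Hence the cuts `(u,v)` is responsible
for are the intervals around `v` inside the bad interval `I_v`.

If `Γ(K)` joins `v` to a good vertex `w`, each such cut separates `v` from `w`, and a path in
`Γ(K)` leaving an interval passes through a hyper-link covering it. Conversely, if the
component of `v` in `Γ(K)` stays inside `I_v`, its convex hull is a cut `(u,v)` is responsible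
for, and a hyper-link covering the hull would intersect the component and bring a vertex
outside the hull into it.
-/

open Relation Finset

theorem Relation.ReflTransGen.exists_step_of_not {α : Type*} {r : α → α → Prop} {P : α → Prop}
    {a b : α} (h : ReflTransGen r a b) (ha : P a) (hb : ¬P b) :
    ∃ c d, ReflTransGen r a c ∧ r c d ∧ P c ∧ ¬P d := by
  induction h with
  | refl => exact absurd ha hb
  | @tail c d hac hcd ih =>
    by_cases hc : P c
    · exact ⟨c, d, hac, hcd, hc, hb⟩
    · exact ih hc

section Arborescence

variable {F : Finset (ℕ × ℕ)}

theorem exists_jump_of_reach {p q l w : ℕ} (hpq : p ≤ q) (h : Reach F l w)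
    (hclean : ∀ y, Reach F y w → y ∉ Set.Icc p q)
    (hside : (l < p ∧ q < w) ∨ (q < l ∧ w < p)) :
    ∃ s t, (s, t) ∈ F ∧ Reach F l s ∧ min s t < p ∧ q < max s t := by
  induction h with
  | refl => omega
  | @tail b c hlb e ih =>
    by_cases hb : (l < p ∧ q < b) ∨ (q < l ∧ b < p)
    · exact ih (fun y hy => hclean y (hy.tail e)) hb
    · have hbC := hclean b (.single e)
      rw [Set.mem_Icc] at hbC
      exact ⟨b, c, e, hlb, by omega, by omega⟩

namespace RSpecial

variable {R : Finset ℕ}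

theorem fst_mem (hF : RSpecial R F) {a b : ℕ} (h : (a, b) ∈ F) : a ∈ R := (hF.1 _ h).2.1

theorem snd_mem (hF : RSpecial R F) {a b : ℕ} (h : (a, b) ∈ F) : b ∈ R := (hF.1 _ h).2.2

theorem snd_ne_zero (hF : RSpecial R F) {a b : ℕ} (h : (a, b) ∈ F) : b ≠ 0 := hF.2.1 _ h

theorem not_crosses (hF : RSpecial R F) {f g : ℕ × ℕ} (hf : f ∈ F) (hg : g ∈ F) (hne : f ≠ g) :
    ¬Crosses f g := hF.2.2.2.2.1 f hf g hg hne

theorem not_same_direction (hF : RSpecial R F) {a b c : ℕ} (hb : (a, b) ∈ F) (hc : (a, c) ∈ F)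
    (hbc : b ≠ c) : ¬((a < b ∧ a < c) ∨ (b < a ∧ c < a)) :=
  hF.2.2.2.2.2 _ hb _ hc (by simpa using hbc) rfl

theorem reach_zero (hF : RSpecial R F) {v : ℕ} (hv : v ∈ R) : Reach F 0 v := hF.2.2.2.1 v hv

theorem eq_zero_of_reach_zero (hF : RSpecial R F) {v : ℕ} (h : Reach F v 0) : v = 0 := by
  rcases h.cases_tail with h | ⟨w, -, e⟩
  · exact h.symm
  · exact absurd rfl (hF.snd_ne_zero e)

theorem fst_eq_of_mem (hF : RSpecial R F) {a a' b : ℕ} (h : (a, b) ∈ F) (h' : (a', b) ∈ F) :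
    a = a' := by
  obtain ⟨_, -, hu⟩ := hF.2.2.1 b (hF.snd_mem h) (hF.snd_ne_zero h)
  simpa using (hu _ ⟨h, rfl⟩).trans (hu _ ⟨h', rfl⟩).symm

theorem reach_fst_of_reach_snd (hF : RSpecial R F) {t u v : ℕ} (hf : (u, v) ∈ F)
    (h : Reach F t v) (hne : t ≠ v) : Reach F t u := by
  rcases h.cases_tail with rfl | ⟨w, hw, e⟩
  · exact absurd rfl hne
  · rwa [hF.fst_eq_of_mem e hf] at hw

theorem not_transGen_self (hF : RSpecial R F) (z : ℕ) :
    ¬TransGen (fun a b => (a, b) ∈ F) z z := by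
  suffices ∀ z, Reach F 0 z → ¬TransGen (fun a b => (a, b) ∈ F) z z by
    intro hz
    obtain ⟨x, -, e⟩ := TransGen.tail'_iff.mp hz
    exact this z (hF.reach_zero (hF.snd_mem e)) hz
  intro z h
  induction h with
  | refl =>
    intro h0
    obtain ⟨x, -, e⟩ := TransGen.tail'_iff.mp h0
    exact hF.snd_ne_zero e rfl
  | @tail x y _ e ih =>
    intro hy
    obtain ⟨x', hyx', e'⟩ := TransGen.tail'_iff.mp hy
    rw [hF.fst_eq_of_mem e' e] at hyx'
    exact ih (TransGen.head' e hyx')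

theorem not_reach_of_mem (hF : RSpecial R F) {u v : ℕ} (hf : (u, v) ∈ F) : ¬Reach F v u :=
  fun h => hF.not_transGen_self u (TransGen.head' hf h)

theorem reach_or_reach_of_reach (hF : RSpecial R F) {a b u : ℕ} (ha : Reach F a u)
    (hb : Reach F b u) : Reach F a b ∨ Reach F b a := by
  induction ha with
  | refl => exact Or.inr hb
  | @tail w u' haw e ih =>
    rcases eq_or_ne b u' with rfl | hbu
    · exact Or.inl (haw.tail e)
    · exact ih (hF.reach_fst_of_reach_snd e hb hbu)

theorem reach_of_lt_of_lt (hF : RSpecial R F) {a b c : ℕ} (hab : (a, b) ∈ F) (hc : c ∈ R)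
    (h₁ : min a b < c) (h₂ : c < max a b) : Reach F b c := by
  have hroot := hF.reach_zero hc
  clear hc
  -- The root path to `c` enters the span of `(a,b)` by a link leaving `b`; a link from
  -- anywhere else would cross `(a,b)` or leave `a` in the direction of `b`.
  induction hroot with
  | refl => omega
  | @tail x y _ e ih =>
    by_cases hx : min a b < x ∧ x < max a b
    · exact (ih hx.1 hx.2).tail e
    rcases eq_or_ne x b with rfl | hxb
    · exact .single e
    rcases eq_or_ne x a with rfl | hxa
    · exact absurd (by omega) (hF.not_same_direction e hab (by omega))
    · have hne : (x, y) ≠ (a, b) := fun h => hxa (Prod.mk.inj h).1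
      exact absurd (by unfold Crosses; omega) (hF.not_crosses e hab hne)

theorem not_mem_of_reach_of_responsible (hF : RSpecial R F) {u v : ℕ} {C : Set ℕ}
    (hresp : Responsible F (u, v) C) (h0 : 0 ∉ C) (y : ℕ) (hy : Reach F y u) : y ∉ C := by
  have hyR : y ∈ R := by
    rcases hy.cases_head with rfl | ⟨c, e, -⟩
    · exact hF.fst_mem hresp.1
    · exact hF.fst_mem e
  have hroot := hF.reach_zero hyR
  clear hyR
  induction hroot with
  | refl => exact h0
  | @tail x y _ e ih =>
    exact fun hyC => hresp.2.2 _ e hy ⟨hyC, ih ((ReflTransGen.single e).trans hy)⟩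

section EnteringLinks

variable {p q u v x z : ℕ} (hF : RSpecial R F) (hf : (u, v) ∈ F) (hg : (x, z) ∈ F)
  (hv : v ∈ Set.Icc p q) (hz : z ∈ Set.Icc p q)
  (hu : ∀ y, Reach F y u → y ∉ Set.Icc p q) (hx : ∀ y, Reach F y x → y ∉ Set.Icc p q)
include hF hf hg hv hz hu hx

theorem reach_or_exists_deeper_common_ancestor
    {l : ℕ} (hlu : Reach F l u) (hlx : Reach F l x) (hux : (u < p ∧ q < x) ∨ (q < u ∧ x < p)) :
    Reach F v z ∨ ∃ t, TransGen (fun a b => (a, b) ∈ F) l t ∧ Reach F t u ∧ Reach F t x := by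
  have hl := hu l hlu
  rw [Set.mem_Icc] at hl hv hz
  obtain ⟨s, t, hst, hls, hs, ht⟩ :
      ∃ s t, (s, t) ∈ F ∧ Reach F l s ∧ min s t < p ∧ q < max s t := by
    by_cases hopp : (l < p ∧ q < u) ∨ (q < l ∧ u < p)
    · exact exists_jump_of_reach (by omega) hlu hu hopp
    · exact exists_jump_of_reach (by omega) hlx hx (by omega)
  have htv := hF.reach_of_lt_of_lt hst (hF.snd_mem hf) (by omega) (by omega)
  have htz := hF.reach_of_lt_of_lt hst (hF.snd_mem hg) (by omega) (by omega)
  rcases eq_or_ne t v with rfl | htv'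
  · exact Or.inl htz
  · exact Or.inr ⟨t, TransGen.tail' hls hst, hF.reach_fst_of_reach_snd hf htv htv',
      hF.reach_fst_of_reach_snd hg htz (by omega)⟩

theorem reach_of_opposite_sides (hux : (u < p ∧ q < x) ∨ (q < u ∧ x < p)) : Reach F v z := by
  -- Descend along common ancestors of `u` and `x`: each one yields a deeper one, unless the
  -- link jumping over the interval from it lands at `v`.
  suffices ∀ l, Reach F l u → Reach F l x → Reach F v z from
    this 0 (hF.reach_zero (hF.fst_mem hf)) (hF.reach_zero (hF.fst_mem hg))
  intro l hlu
  induction hlu using ReflTransGen.head_induction_on with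
  | refl =>
    intro hux'
    rcases hF.reach_or_exists_deeper_common_ancestor hf hg hv hz hu hx .refl hux' hux with
      h | ⟨t, hut, htu, -⟩
    · exact h
    · exact absurd (hut.trans_left htu) (hF.not_transGen_self u)
  | @head l l' e hl'u ih =>
    intro hlx
    rcases hF.reach_or_exists_deeper_common_ancestor hf hg hv hz hu hx (hl'u.head e) hlx hux with
      h | ⟨t, hlt, htu, htx⟩
    · exact h
    refine ih (ReflTransGen.trans ?_ htx)
    rcases hF.reach_or_reach_of_reach hl'u htu with h | htl'
    · exact h
    rcases eq_or_ne t l' with rfl | hne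
    · exact .refl
    · exact absurd (hlt.trans_left (hF.reach_fst_of_reach_snd e htl' hne))
        (hF.not_transGen_self l)

theorem reach_of_enters : Reach F v z := by
  have hu' := hu u .refl
  have hx' := hx x .refl
  rw [Set.mem_Icc] at hu' hx' hv hz
  by_cases h₁ : min u v < x ∧ x < max u v
  · exact (hF.reach_of_lt_of_lt hf (hF.fst_mem hg) h₁.1 h₁.2).tail hg
  by_cases h₂ : min x z < u ∧ u < max x z
  · exact absurd ⟨hz.1, hz.2⟩ (hu z (hF.reach_of_lt_of_lt hg (hF.fst_mem hf) h₂.1 h₂.2))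
  rcases eq_or_ne x u with rfl | hxu
  · rcases eq_or_ne z v with rfl | hzv
    · exact .refl
    · exact absurd (by omega) (hF.not_same_direction hf hg hzv.symm)
  · exact hF.reach_of_opposite_sides hf hg hv hz hu hx (by omega)

end EnteringLinks

theorem reach_of_responsible (hF : RSpecial R F) {p q u v : ℕ} (hp : 1 ≤ p)
    (hresp : Responsible F (u, v) (Set.Icc p q)) (z : ℕ) (hz : z ∈ R) (hzC : z ∈ Set.Icc p q) :
    Reach F v z := by
  have hu := hF.not_mem_of_reach_of_responsible hresp fun h => by rw [Set.mem_Icc] at h; omega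
  suffices ∀ z, Reach F 0 z → ∀ y, Reach F y z → y ∈ Set.Icc p q → Reach F v y from
    this z (hF.reach_zero hz) z .refl hzC
  intro z h
  induction h with
  | refl =>
    intro y hy hyC
    rw [hF.eq_zero_of_reach_zero hy] at hyC
    exact absurd hyC.1 (by omega)
  | @tail x z _ e ih =>
    intro y hyz hyC
    rcases eq_or_ne y z with rfl | hne
    · by_cases hanc : ∃ y', Reach F y' x ∧ y' ∈ Set.Icc p q
      · obtain ⟨y', hy'x, hy'C⟩ := hanc
        exact ((ih y' hy'x hy'C).trans hy'x).tail e
      · simp only [not_exists, not_and] at hanc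
        exact hF.reach_of_enters hresp.1 e hresp.2.1.1 hyC hu hanc
    · exact ih y (hF.reach_fst_of_reach_snd e hyz hne) hyC

theorem responsible_iff (hF : RSpecial R F) {p q u v : ℕ} (hf : (u, v) ∈ F) (hp : 1 ≤ p) :
    Responsible F (u, v) (Set.Icc p q) ↔
      v ∈ Set.Icc p q ∧ ∀ z ∈ R, z ∈ Set.Icc p q → Reach F v z := by
  refine ⟨fun h => ⟨h.2.1.1, hF.reach_of_responsible hp h⟩,
    fun ⟨hv, hdesc⟩ => ⟨hf, ⟨hv, fun hu => ?_⟩, fun g hg hgu hgC => ?_⟩⟩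
  · exact hF.not_reach_of_mem hf (hdesc u (hF.fst_mem hf) hu)
  · exact hF.not_reach_of_mem hf ((hdesc g.2 (hF.snd_mem hg) hgC.1).trans hgu)

end RSpecial
end Arborescence

section BadInterval

variable {n : ℕ} {R : Finset ℕ} {F : Finset (ℕ × ℕ)} {v a b : ℕ}

theorem exists_isBadInterval (hv : v ≤ n - 1) : ∃ a b, IsBadInterval n R F v a b := by
  classical
  let P : ℕ → ℕ → Prop := fun a b => ∀ w ∈ R, a ≤ w → w ≤ b → Reach F v w
  have hvv : P v v := fun w _ h₁ h₂ => le_antisymm h₂ h₁ ▸ .refl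
  have hex : ∃ a, P a v := ⟨v, hvv⟩
  have hav : Nat.find hex ≤ v := Nat.find_min' hex hvv
  have hvb : v ≤ Nat.findGreatest (P v) (n - 1) := Nat.le_findGreatest hv hvv
  refine ⟨Nat.find hex, Nat.findGreatest (P v) (n - 1), hav, hvb, Nat.findGreatest_le _,
    fun w hw h₁ h₂ => ?_, fun a' b' ha' hb' hb'n hP => ?_⟩
  · rcases le_total w v with h | h
    · exact Nat.find_spec hex w hw h₁ h
    · exact Nat.findGreatest_spec hv hvv w hw h h₂
  · refine ⟨le_antisymm ha' (Nat.find_min' hex fun w hw h₁ h₂ => hP w hw h₁ (by omega)),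
      le_antisymm ?_ hb'⟩
    exact Nat.le_findGreatest hb'n fun w hw h₁ h₂ => hP w hw (by omega) h₂

theorem IsBadInterval.one_le (hF : RSpecial R F) (hI : IsBadInterval n R F v a b) (hr : 0 ∈ R)
    (hv : v ≠ 0) : 1 ≤ a := by
  by_contra ha
  exact hv (hF.eq_zero_of_reach_zero (hI.2.2.2.1 0 hr (by omega) (Nat.zero_le _)))

theorem IsBadInterval.le_and_le_of_forall_reach (hI : IsBadInterval n R F v a b) {p q : ℕ}
    (hv : v ∈ Set.Icc p q) (hq : q ≤ n - 1)
    (hdesc : ∀ z ∈ R, z ∈ Set.Icc p q → Reach F v z) : a ≤ p ∧ q ≤ b := by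
  obtain ⟨hav, hvb, hbn, hreach, hmax⟩ := hI
  obtain ⟨hpv, hvq⟩ := hv
  have := hmax (min a p) (max b q) (min_le_left _ _) (le_max_left _ _) (max_le hbn hq)
    fun z hz h₁ h₂ => ?_
  · omega
  · by_cases hz' : a ≤ z ∧ z ≤ b
    · exact hreach z hz hz'.1 hz'.2
    · exact hdesc z hz ⟨by omega, by omega⟩

end BadInterval

section Hyperlinks

variable {K : Finset (Finset ℕ)} {ℓ ℓ' : Finset ℕ}

theorem Intersecting.symm (h : Intersecting ℓ ℓ') : Intersecting ℓ' ℓ := by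
  rcases h with h | ⟨h₁, h₂⟩
  · exact .inl (inter_comm ℓ ℓ' ▸ h)
  · exact .inr ⟨h₂, h₁⟩

theorem intersecting_of_mem {x : ℕ} (h : x ∈ ℓ) (h' : x ∈ ℓ') : Intersecting ℓ ℓ' :=
  .inl ⟨x, mem_inter.mpr ⟨h, h'⟩⟩

theorem intersecting_of_le_of_le {y y' e₁ e₂ : ℕ} (hy : y ∈ ℓ) (hy' : y' ∈ ℓ) (he₁ : e₁ ∈ ℓ')
    (he₂ : e₂ ∈ ℓ') (h₁ : e₁ ≤ y) (h₂ : y ≤ e₂) (hout : y' < e₁ ∨ e₂ < y') :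
    Intersecting ℓ ℓ' := by
  rcases h₁.lt_or_eq with h₁ | rfl
  · rcases h₂.lt_or_eq with h₂ | rfl
    · refine .inr ⟨⟨y, hy, e₁, he₁, e₂, he₂, h₁, h₂⟩, ?_⟩
      rcases hout with h | h
      · exact ⟨e₁, he₁, y', hy', y, hy, h, h₁⟩
      · exact ⟨e₂, he₂, y, hy, y', hy', h₂, h⟩
    · exact intersecting_of_mem hy he₂
  · exact intersecting_of_mem hy he₁

theorem Intersecting.exists_mem_of_subset {C : Set ℕ} [C.OrdConnected] (h : Intersecting ℓ ℓ')
    (hsub : ∀ x ∈ ℓ, x ∈ C) : ∃ y ∈ ℓ', y ∈ C := by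
  rcases h with ⟨x, hx⟩ | ⟨-, y, hy, x₁, hx₁, x₂, hx₂, h₁, h₂⟩
  · exact ⟨x, (mem_inter.mp hx).2, hsub x (mem_inter.mp hx).1⟩
  · exact ⟨y, hy, Set.OrdConnected.out ‹_› (hsub x₁ hx₁) (hsub x₂ hx₂) ⟨h₁.le, h₂.le⟩⟩

theorem gammaPath_of_intersecting {x y : ℕ} (hℓ : ℓ ∈ K) (hℓ' : ℓ' ∈ K)
    (h : Intersecting ℓ ℓ') (hx : x ∈ ℓ) (hy : y ∈ ℓ') : GammaPath K x y :=
  ⟨ℓ, hℓ, ℓ', hℓ', hx, hy, .single ⟨hℓ, hℓ', h⟩⟩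

namespace GammaPath

variable {u v w : ℕ}

theorem symm (h : GammaPath K u v) : GammaPath K v u := by
  obtain ⟨ℓ₁, h₁, ℓ₂, h₂, hu, hv, hpath⟩ := h
  refine ⟨ℓ₂, h₂, ℓ₁, h₁, hv, hu, ?_⟩
  clear h₂ hv
  induction hpath with
  | refl => exact .refl
  | tail _ e ih => exact ih.head ⟨e.2.1, e.1, e.2.2.symm⟩

theorem trans (h : GammaPath K u v) (h' : GammaPath K v w) : GammaPath K u w := by
  obtain ⟨ℓ₁, h₁, ℓ₂, h₂, hu, hv, hpath⟩ := h
  obtain ⟨ℓ₃, h₃, ℓ₄, h₄, hv', hw, hpath'⟩ := h'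
  exact ⟨ℓ₁, h₁, ℓ₄, h₄, hu, hw, (hpath.tail ⟨h₂, h₃, intersecting_of_mem hv hv'⟩).trans hpath'⟩

theorem lt {n : ℕ} (hK : ∀ ℓ ∈ K, ℓ ⊆ range n) (h : GammaPath K u v) : v < n := by
  obtain ⟨-, -, ℓ, hℓ, -, hv, -⟩ := h
  exact mem_range.mp (hK ℓ hℓ hv)

theorem exists_covers {C : Set ℕ} [C.OrdConnected] (h : GammaPath K v w) (hv : v ∈ C)
    (hw : w ∉ C) : ∃ ℓ ∈ K, Covers ℓ C := by
  obtain ⟨ℓ₁, h₁, ℓ₂, -, hv₁, hw₂, hpath⟩ := h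
  by_cases hsub : ∀ x ∈ ℓ₁, x ∈ C
  · obtain ⟨ℓ, ℓ', -, ⟨-, hℓ', hint⟩, hℓ, hℓ'C⟩ :=
      hpath.exists_step_of_not (P := fun ℓ => ∀ x ∈ ℓ, x ∈ C) hsub fun h => hw (h w hw₂)
    simp only [not_forall, exists_prop] at hℓ'C
    exact ⟨ℓ', hℓ', hint.exists_mem_of_subset hℓ, hℓ'C⟩
  · simp only [not_forall, exists_prop] at hsub
    exact ⟨ℓ₁, h₁, ⟨v, hv₁, hv⟩, hsub⟩

theorem exists_straddle {c d y : ℕ} (h : GammaPath K c d) (hcy : c ≤ y) (hyd : y ≤ d) :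
    ∃ ℓ ∈ K, (∀ x ∈ ℓ, GammaPath K c x) ∧ (∃ e ∈ ℓ, e ≤ y) ∧ ∃ e ∈ ℓ, y ≤ e := by
  obtain ⟨ℓ₁, h₁, ℓ₂, h₂, hc₁, hd₂, hpath⟩ := h
  by_cases hlow : ∃ e ∈ ℓ₂, e ≤ y
  · exact ⟨ℓ₂, h₂, fun x hx => ⟨ℓ₁, h₁, ℓ₂, h₂, hc₁, hx, hpath⟩, hlow, d, hd₂, hyd⟩
  · obtain ⟨ℓ, ℓ', hℓ₁ℓ, ⟨hℓ, -, hint⟩, hlowℓ, hlowℓ'⟩ :=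
      hpath.exists_step_of_not (P := fun ℓ => ∃ e ∈ ℓ, e ≤ y) ⟨c, hc₁, hcy⟩ hlow
    simp only [not_exists, not_and, not_le] at hlowℓ'
    obtain ⟨e, he, hye⟩ := hint.symm.exists_mem_of_subset (C := Set.Ioi y) hlowℓ'
    exact ⟨ℓ, hℓ, fun x hx => ⟨ℓ₁, h₁, ℓ, hℓ, hc₁, hx, hℓ₁ℓ⟩, hlowℓ, e, he, le_of_lt hye⟩

end GammaPath

theorem exists_Icc_hull_gammaPath {n : ℕ} (hK : ∀ ℓ ∈ K, ℓ ⊆ range n) (v : ℕ) :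
    ∃ c d, (c = v ∨ GammaPath K v c) ∧ (d = v ∨ GammaPath K v d) ∧ v ∈ Set.Icc c d ∧
      ∀ w, GammaPath K v w → w ∈ Set.Icc c d := by
  classical
  let S := insert v ((range n).filter (GammaPath K v))
  have hS : S.Nonempty := insert_nonempty _ _
  have hmem : ∀ s ∈ S, s = v ∨ GammaPath K v s := by
    intro s hs
    rcases mem_insert.mp hs with h | h
    · exact .inl h
    · exact .inr (mem_filter.mp h).2
  have hhull : ∀ s ∈ S, s ∈ Set.Icc (S.min' hS) (S.max' hS) := fun s hs =>
    ⟨S.min'_le s hs, S.le_max' s hs⟩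
  exact ⟨S.min' hS, S.max' hS, hmem _ (S.min'_mem hS), hmem _ (S.max'_mem hS),
    hhull v (mem_insert_self _ _), fun w hw =>
      hhull w (mem_insert_of_mem (mem_filter.mpr ⟨mem_range.mpr (hw.lt hK), hw⟩))⟩

theorem not_covers_Icc_of_gammaPath {v c d : ℕ} (hc : c = v ∨ GammaPath K v c)
    (hd : d = v ∨ GammaPath K v d) (hhull : ∀ w, GammaPath K v w → w ∈ Set.Icc c d)
    (hℓ : ℓ ∈ K) : ¬Covers ℓ (Set.Icc c d) := by
  rintro ⟨⟨y, hy, hyC⟩, y', hy', hy'C⟩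
  refine hy'C (hhull y' ?_)
  by_cases hvv : GammaPath K v v
  · replace hc : GammaPath K v c := hc.elim (· ▸ hvv) id
    replace hd : GammaPath K v d := hd.elim (· ▸ hvv) id
    obtain ⟨ℓs, hℓs, hreach, ⟨e₁, he₁, he₁y⟩, e₂, he₂, hye₂⟩ :=
      (hc.symm.trans hd).exists_straddle hyC.1 hyC.2
    have hv₁ := hc.trans (hreach e₁ he₁)
    have hint : Intersecting ℓ ℓs := by
      have h₁ := (hhull e₁ hv₁).1
      have h₂ := (hhull e₂ (hc.trans (hreach e₂ he₂))).2
      rw [Set.mem_Icc] at hy'C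
      exact intersecting_of_le_of_le hy hy' he₁ he₂ he₁y hye₂ (by omega)
    exact hv₁.trans (gammaPath_of_intersecting hℓs hℓ hint.symm he₁ hy')
  · have hcv : c = v := hc.resolve_right fun h => hvv (h.trans h.symm)
    have hdv : d = v := hd.resolve_right fun h => hvv (h.trans h.symm)
    have hyv : y = v := by
      rw [Set.mem_Icc] at hyC
      omega
    exact ⟨ℓ, hℓ, ℓ, hℓ, hyv ▸ hy, hy', .refl⟩

end Hyperlinks

section Drop

variable {n : ℕ} {R : Finset ℕ} {F : Finset (ℕ × ℕ)} {K : Finset (Finset ℕ)} {u v a b : ℕ}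

theorem inDrop_of_gammaPath (hF : RSpecial R F) (hf : (u, v) ∈ F)
    (hI : IsBadInterval n R F v a b) {w : ℕ} (hw : w ∉ Set.Icc a b) (hpath : GammaPath K v w) :
    InDrop n R F K (u, v) := by
  refine ⟨hf, ?_⟩
  rintro _ ⟨p, q, hp, -, hq, rfl⟩ - hresp
  obtain ⟨hv, hdesc⟩ := (hF.responsible_iff hf hp).mp hresp
  have hsub := hI.le_and_le_of_forall_reach hv hq hdesc
  refine hpath.exists_covers hv fun hwC => hw ?_
  rw [Set.mem_Icc] at hwC ⊢
  omega

theorem exists_gammaPath_of_inDrop (hF : RSpecial R F) (hr : 0 ∈ R)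
    (hK : ∀ ℓ ∈ K, ℓ ⊆ range n) (hf : (u, v) ∈ F) (hI : IsBadInterval n R F v a b)
    (hdrop : InDrop n R F K (u, v)) : ∃ w, GammaPath K v w ∧ w ∉ Set.Icc a b := by
  by_contra! hbad
  obtain ⟨c, d, hc, hd, hv, hhull⟩ := exists_Icc_hull_gammaPath hK v
  have hab : ∀ s, (s = v ∨ GammaPath K v s) → a ≤ s ∧ s ≤ b := by
    rintro s (rfl | hs)
    · exact ⟨hI.1, hI.2.1⟩
    · exact hbad s hs
  have hc₁ : 1 ≤ c := (hI.one_le hF hr (hF.snd_ne_zero hf)).trans (hab c hc).1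
  have hresp : Responsible F (u, v) (Set.Icc c d) :=
    (hF.responsible_iff hf hc₁).mpr ⟨hv, fun z hz hzC =>
      hI.2.2.2.1 z hz ((hab c hc).1.trans hzC.1) (hzC.2.trans (hab d hd).2)⟩
  obtain ⟨ℓ, hℓ, hcov⟩ := hdrop.2 _ ⟨c, d, hc₁, hv.1.trans hv.2, (hab d hd).2.trans hI.2.2.1, rfl⟩
    ⟨v, hv, hF.snd_mem hf⟩ hresp
  exact not_covers_Icc_of_gammaPath hc hd hhull hℓ hcov

end Drop

theorem stmt7_general (n : ℕ) (R : Finset ℕ) (hR : R ⊆ Finset.range n) (hr : 0 ∈ R)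
    (F : Finset (ℕ × ℕ)) (hsp : RSpecial R F)
    (K : Finset (Finset ℕ)) (hK : ∀ ℓ ∈ K, ℓ ⊆ Finset.range n ∧ 2 ≤ ℓ.card)
    (u v : ℕ) (hf : (u, v) ∈ F) :
    InDrop n R F K (u, v) ↔
      ∃ w : ℕ, w < n ∧ (∃ a b : ℕ, IsBadInterval n R F v a b ∧ w ∉ Set.Icc a b) ∧
        GammaPath K v w := by
  have hK' : ∀ ℓ ∈ K, ℓ ⊆ range n := fun ℓ hℓ => (hK ℓ hℓ).1
  constructor
  · intro hdrop
    have hv : v ≤ n - 1 := by have := mem_range.mp (hR (hsp.snd_mem hf)); omega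
    obtain ⟨a, b, hI⟩ := exists_isBadInterval (R := R) (F := F) hv
    obtain ⟨w, hpath, hw⟩ := exists_gammaPath_of_inDrop hsp hr hK' hf hI hdrop
    exact ⟨w, hpath.lt hK', ⟨a, b, hI, hw⟩, hpath⟩
  · rintro ⟨w, -, ⟨a, b, hI, hw⟩, hpath⟩
    exact inDrop_of_gammaPath hsp hf hI hw hpath

/-- A directed link `(u,v) ∈ F` is in `drop_F(K)` iff `Γ(K)` contains a path from a
hyper-link containing `v` to a hyper-link containing some `v`-good vertex `w`. -/
theorem stmt7 (n : ℕ) (hn : 3 ≤ n) (R : Finset ℕ) (hR : R ⊆ Finset.range n) (hr : 0 ∈ R)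
    (F : Finset (ℕ × ℕ)) (hsp : RSpecial R F) (hfeas : FeasibleDir n R F)
    (K : Finset (Finset ℕ)) (hK : ∀ ℓ ∈ K, ℓ ⊆ Finset.range n ∧ 2 ≤ ℓ.card)
    (u v : ℕ) (hf : (u, v) ∈ F) :
    InDrop n R F K (u, v) ↔
      ∃ w : ℕ, w < n ∧ (∃ a b : ℕ, IsBadInterval n R F v a b ∧ w ∉ Set.Icc a b) ∧
        GammaPath K v w :=
  stmt7_general n R hR hr F hsp K hK u v hf
end
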